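/- Let n be odd with n ≥ 3 and let (λ₁, v) be a real eigenpair of the n×n real matrix A, where every component of v is nonzero. Let S = diag(v) and B = S^{-1} A S. For each j, let β_j and γ_j be, respectively, the opposite in sign of the ((n−1)/2)-th largest and of the ((n+1)/2)-th largest numbers among the n−1 off-diagonal entries b_{1j}, …, b_{j−1,j}, b_{j+1,j}, …, b_{nj} of column j of B, and let F = [f_{ij}] = [b_{ij} + β_j] and G = [g_{ij}] = [b_{ij} + γ_j]. If λ is a complex eigenvalue of A with λ ≠ λ₁, then |λ| ≤ min{ max_{1≤i≤n} (|f_{ii}| + r̂_i(F^T)), max_{1≤i≤n} (|g_{ii}| + r̂_i(G^T)) }, where r̂_i(F^T) and r̂_i(G^T) are the radii of the i-th Gershgorin discs of the second type of F^T and G^T (computed from the i-th columns of F and G). -/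

import Mathlib

open Matrix
open scoped ENNReal

/-- Non-increasing (descending) sort of a list of reals. -/
noncomputable def sortDesc (l : List ℝ) : List ℝ := (l.insertionSort (· ≤ ·)).reverse

/-- Given the descending rearrangement `l` of `n` numbers, the sum of the largest
(about) half minus the sum of the smallest (about) half, skipping the middle
element when `n` is odd. -/
noncomputable def halfSumDiff (n : ℕ) (l : List ℝ) : ℝ :=
  if n % 2 = 1 then (l.take ((n - 1) / 2)).sum - (l.drop ((n + 1) / 2)).sum
  else (l.take (n / 2)).sum - (l.drop (n / 2)).sum

/-- Radius of the `i`-th Gershgorin disc of the second type of `M`, computed from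
the `i`-th row of `M` with the diagonal entry replaced by `0`. -/
noncomputable def secondTypeRadius {n : ℕ} (M : Matrix (Fin n) (Fin n) ℝ) (i : Fin n) : ℝ :=
  halfSumDiff n (sortDesc (List.ofFn fun j : Fin n => if j = i then 0 else M i j))

/-- The `i`-th Gershgorin disc of the second type of `M`. -/
noncomputable def secondTypeDisc {n : ℕ} (M : Matrix (Fin n) (Fin n) ℝ) (i : Fin n) : Set ℂ :=
  Metric.closedBall ((M i i : ℝ) : ℂ) (secondTypeRadius M i)

/-- The Gershgorin region of the second type of `M`. -/
noncomputable def secondTypeRegion {n : ℕ} (M : Matrix (Fin n) (Fin n) ℝ) : Set ℂ :=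
  ⋃ i : Fin n, secondTypeDisc M i

/-- `μ` is a (complex) eigenvalue of the real matrix `A`, i.e. a complex root of
its characteristic polynomial. -/
def IsEigenvalueC {n : ℕ} (A : Matrix (Fin n) (Fin n) ℝ) (μ : ℂ) : Prop :=
  ((A.map ((↑) : ℝ → ℂ)).charpoly).IsRoot μ

/-- The `k`-th largest element (1-indexed) among the `n - 1` off-diagonal entries of
column `j` of `B`. -/
noncomputable def kthLargestOffDiag {n : ℕ} (B : Matrix (Fin n) (Fin n) ℝ) (j : Fin n)
    (k : ℕ) : ℝ :=
  (sortDesc (((List.ofFn fun i : Fin n => B i j).eraseIdx j.val))).getD (k - 1) 0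

/-- The ℓ_p norm of a vector in ℝ^n. -/
noncomputable def lpNorm {n : ℕ} (p : ℝ≥0∞) (x : Fin n → ℝ) : ℝ :=
  @norm (PiLp p fun _ : Fin n => ℝ) _ ((WithLp.equiv p (∀ _ : Fin n, ℝ)).symm x)

/-- The seminorm-like quantity `τ_p(B)`: the supremum of `‖Bᵀ x‖_p` over all real
vectors `x` with `xᵀ e = 0` and `‖x‖_p = 1`. -/
noncomputable def tau {n : ℕ} (p : ℝ≥0∞) (B : Matrix (Fin n) (Fin n) ℝ) : ℝ :=
  sSup { t : ℝ | ∃ x : Fin n → ℝ, (∑ i, x i) = 0 ∧ lpNorm p x = 1 ∧ t = lpNorm p (Bᵀ *ᵥ x) }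

/-- The Ostrowski–Brauer set `Γ(M)` of a real square matrix `M`. -/
noncomputable def brauerSet {n : ℕ} (M : Matrix (Fin n) (Fin n) ℝ) : Set ℂ :=
  ⋃ (i : Fin n) (j : Fin n) (_ : i < j),
    { y : ℂ | ‖y - (M i i : ℝ)‖ * ‖y - (M j j : ℝ)‖ ≤
        (∑ k ∈ Finset.univ.filter fun k => k ≠ i, |M i k|) *
        (∑ k ∈ Finset.univ.filter fun k => k ≠ j, |M j k|) }

/-- `cs_j(A)` from Definition 2.3: sorted column sums difference. -/
noncomputable def csCol {n : ℕ} (A : Matrix (Fin n) (Fin n) ℝ) (j : Fin n) : ℝ :=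
  halfSumDiff n (sortDesc (List.ofFn fun i : Fin n => A i j))

/-! Conjugating by `S = diag v` gives `B` with all row sums `λ₁`, so `1` is a right eigenvector
of `B` and every left eigenvector `x` of `B` for `μ ≠ λ₁` satisfies `∑ xᵢ = 0`. Hence adding a
constant to each column of `B` leaves `x ᵥ* B` unchanged, and `x` is an eigenvector of `Fᵀ` and of
`Gᵀ` for `μ`. Because `∑ xⱼ = 0`, the row of `Fᵀ` at an index `i` maximizing `|xᵢ|` gives
`|μ - fᵢᵢ| ≤ ∑ⱼ |aⱼ - c|` for every real `c`, where `a` is that row with its diagonal entry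
replaced by `0`; taking `c` a median of `a` turns the right-hand side into `r̂ᵢ(Fᵀ)`. -/

namespace List

theorem sum_map_abs_sub_of_forall_le {c : ℝ} :
    ∀ {l : List ℝ}, (∀ x ∈ l, c ≤ x) → (l.map fun x => |x - c|).sum = l.sum - l.length * c
  | [], _ => by simp
  | a :: l, h => by
    rw [forall_mem_cons] at h
    simp only [map_cons, sum_cons, length_cons, abs_of_nonneg (sub_nonneg.2 h.1),
      sum_map_abs_sub_of_forall_le h.2]
    push_cast
    ring

theorem sum_map_abs_sub_of_forall_ge {c : ℝ} :
    ∀ {l : List ℝ}, (∀ x ∈ l, x ≤ c) → (l.map fun x => |x - c|).sum = l.length * c - l.sum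
  | [], _ => by simp
  | a :: l, h => by
    rw [forall_mem_cons] at h
    simp only [map_cons, sum_cons, length_cons, abs_of_nonpos (sub_nonpos.2 h.1),
      sum_map_abs_sub_of_forall_ge h.2]
    push_cast
    ring

end List

theorem sortDesc_perm (l : List ℝ) : (sortDesc l).Perm l :=
  (List.reverse_perm _).trans (List.perm_insertionSort _ l)

theorem sortDesc_pairwise (l : List ℝ) : (sortDesc l).Pairwise (· ≥ ·) :=
  List.pairwise_reverse.2 (List.pairwise_insertionSort _ l)

theorem halfSumDiff_eq_sum_abs_sub_getElem {n : ℕ} (hodd : n % 2 = 1) {s : List ℝ}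
    (hs : s.Pairwise (· ≥ ·)) (hlen : s.length = n) :
    halfSumDiff n s = (s.map fun x => |x - s[(n - 1) / 2]'(by omega)|).sum := by
  set m := (n - 1) / 2
  have hm : m < s.length := by omega
  set c := s[m]
  have hsplit : s = s.take m ++ c :: s.drop (m + 1) := by
    rw [← List.drop_eq_getElem_cons hm, List.take_append_drop]
  rw [hsplit, List.pairwise_append, List.pairwise_cons] at hs
  obtain ⟨-, ⟨hmid, -⟩, htake⟩ := hs
  rw [halfSumDiff, if_pos hodd, show (n + 1) / 2 = m + 1 by omega]
  conv_rhs => rw [hsplit]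
  rw [List.map_append, List.sum_append, List.map_cons, List.sum_cons, sub_self, abs_zero,
    zero_add, List.sum_map_abs_sub_of_forall_le fun x hx => htake x hx _ List.mem_cons_self,
    List.sum_map_abs_sub_of_forall_ge hmid, List.length_take, List.length_drop,
    min_eq_left (by omega), show s.length - (m + 1) = m by omega]
  ring

theorem exists_halfSumDiff_sortDesc_eq_sum_abs_sub {n : ℕ} (hodd : n % 2 = 1) {l : List ℝ}
    (hl : l.length = n) : ∃ c, halfSumDiff n (sortDesc l) = (l.map fun x => |x - c|).sum :=
  ⟨_, (halfSumDiff_eq_sum_abs_sub_getElem hodd (sortDesc_pairwise l)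
    ((sortDesc_perm l).length_eq.trans hl)).trans ((sortDesc_perm l).map _).sum_eq⟩

theorem norm_sub_diag_le_sum_abs_sub {ι : Type*} [Fintype ι] [DecidableEq ι]
    (M : Matrix ι ι ℝ) {μ : ℂ} {x : ι → ℂ} (hx : M.map (↑) *ᵥ x = μ • x)
    (hsum : ∑ j, x j = 0) {i : ι} (hmax : ∀ j, ‖x j‖ ≤ ‖x i‖) (hxi : x i ≠ 0) (c : ℝ) :
    ‖μ - M i i‖ ≤ ∑ j, |Function.update (M i) i 0 j - c| := by
  set a := Function.update (M i) i 0
  have hrow : (μ - M i i) * x i = ∑ j, ((a j - c : ℝ) : ℂ) * x j := by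
    have hMx : ∑ j, (M i j : ℂ) * x j = μ * x i := by
      simpa [Matrix.mulVec, dotProduct] using congrFun hx i
    have ha : ∀ j, (a j : ℂ) = M i j - if j = i then (M i i : ℂ) else 0 := by
      intro j; by_cases h : j = i <;> simp [a, h]
    simp only [Complex.ofReal_sub, sub_mul, Finset.sum_sub_distrib, ← Finset.mul_sum, hsum,
      mul_zero, sub_zero, ha, ite_mul, zero_mul, Finset.sum_ite_eq', Finset.mem_univ, if_true,
      hMx]
  have hle : ‖(μ - M i i) * x i‖ ≤ (∑ j, |a j - c|) * ‖x i‖ := by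
    rw [hrow, Finset.sum_mul]
    refine (norm_sum_le _ _).trans (Finset.sum_le_sum fun j _ => ?_)
    rw [norm_mul, Complex.norm_real, Real.norm_eq_abs]
    exact mul_le_mul_of_nonneg_left (hmax j) (abs_nonneg _)
  rw [norm_mul] at hle
  exact le_of_mul_le_mul_right hle (norm_pos_iff.2 hxi)

theorem exists_secondTypeRadius_eq_sum_abs_sub {n : ℕ} (hodd : n % 2 = 1)
    (M : Matrix (Fin n) (Fin n) ℝ) (i : Fin n) :
    ∃ c, secondTypeRadius M i = ∑ j, |Function.update (M i) i 0 j - c| := by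
  obtain ⟨c, hc⟩ := exists_halfSumDiff_sortDesc_eq_sum_abs_sub hodd
    (List.length_ofFn (f := Function.update (M i) i 0))
  refine ⟨c, ?_⟩
  simp only [secondTypeRadius, ← Function.update_apply]
  rw [hc, List.map_ofFn, List.sum_ofFn]
  rfl

theorem mem_secondTypeRegion_of_mulVec_eq_smul {n : ℕ} (hodd : n % 2 = 1)
    (M : Matrix (Fin n) (Fin n) ℝ) {μ : ℂ} {x : Fin n → ℂ} (hx : M.map (↑) *ᵥ x = μ • x)
    (hx0 : x ≠ 0) (hsum : ∑ j, x j = 0) : μ ∈ secondTypeRegion M := by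
  obtain ⟨k, hk⟩ := Function.ne_iff.mp hx0
  have : Nonempty (Fin n) := ⟨k⟩
  obtain ⟨i, hmax⟩ := Finite.exists_max fun j => ‖x j‖
  have hxi : x i ≠ 0 := norm_pos_iff.1 ((norm_pos_iff.2 hk).trans_le (hmax k))
  obtain ⟨c, hc⟩ := exists_secondTypeRadius_eq_sum_abs_sub hodd M i
  refine Set.mem_iUnion.2 ⟨i, Metric.mem_closedBall.2 ?_⟩
  rw [dist_eq_norm, hc]
  exact norm_sub_diag_le_sum_abs_sub M hx hsum hmax hxi c

theorem exists_norm_le_of_mem_secondTypeRegion {n : ℕ} {M : Matrix (Fin n) (Fin n) ℝ} {μ : ℂ}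
    (hμ : μ ∈ secondTypeRegion M) : ∃ i, ‖μ‖ ≤ |M i i| + secondTypeRadius M i := by
  obtain ⟨i, hi⟩ := Set.mem_iUnion.1 hμ
  refine ⟨i, ?_⟩
  calc ‖μ‖ ≤ ‖(M i i : ℂ)‖ + ‖μ - M i i‖ := norm_le_norm_add_norm_sub' _ _
    _ ≤ |M i i| + secondTypeRadius M i := by
      rw [Complex.norm_real, Real.norm_eq_abs, ← dist_eq_norm]
      gcongr
      exact Metric.mem_closedBall.1 hi

section Eigen

variable {ι : Type*} [Fintype ι]

theorem Matrix.exists_vecMul_eq_smul_of_isRoot_charpoly [DecidableEq ι] {K : Type*} [Field K]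
    {M : Matrix ι ι K} {μ : K} (h : M.charpoly.IsRoot μ) : ∃ x ≠ 0, x ᵥ* M = μ • x := by
  rw [← charpoly_transpose, Polynomial.IsRoot, eval_charpoly, ← exists_mulVec_eq_zero_iff] at h
  obtain ⟨x, hx0, hx⟩ := h
  refine ⟨x, hx0, ?_⟩
  rw [sub_mulVec, sub_eq_zero, mulVec_transpose] at hx
  rw [← hx]
  ext i
  simp [mulVec_diagonal]

theorem Matrix.inv_mul_mul_mulVec_eq_smul [DecidableEq ι] {K : Type*} [Field K]
    {S A : Matrix ι ι K} (hS : IsUnit S) {w : ι → K} {μ : K} (hw : A *ᵥ (S *ᵥ w) = μ • (S *ᵥ w)) :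
    (S⁻¹ * A * S) *ᵥ w = μ • w := by
  rw [← mulVec_mulVec, ← mulVec_mulVec, hw, mulVec_smul, mulVec_mulVec,
    nonsing_inv_mul _ ((isUnit_iff_isUnit_det S).1 hS), one_mulVec]

theorem Matrix.sum_eq_zero_of_vecMul_eq_smul {R : Type*} [CommRing R] [NoZeroDivisors R]
    {M : Matrix ι ι R} {lam μ : R} (hrow : M *ᵥ 1 = lam • 1) {x : ι → R}
    (hx : x ᵥ* M = μ • x) (hne : μ ≠ lam) : ∑ i, x i = 0 := by
  have h : μ * (x ⬝ᵥ 1) = lam * (x ⬝ᵥ 1) := by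
    rw [← smul_eq_mul, ← smul_dotProduct, ← hx, ← dotProduct_mulVec, hrow, dotProduct_smul,
      smul_eq_mul]
  have := (mul_eq_mul_right_iff.1 h).resolve_left hne
  simpa [dotProduct] using this

theorem Matrix.vecMul_eq_of_sum_eq_zero {R : Type*} [Semiring R] {B C : Matrix ι ι R}
    {c : ι → R} (hC : ∀ i j, C i j = B i j + c j) {x : ι → R} (hx : ∑ i, x i = 0) :
    x ᵥ* C = x ᵥ* B := by
  ext j
  simp only [vecMul, dotProduct, hC, mul_add, Finset.sum_add_distrib, ← Finset.sum_mul, hx,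
    zero_mul, add_zero]

end Eigen

theorem isEigenvalueC_iff {n : ℕ} (A : Matrix (Fin n) (Fin n) ℝ) (μ : ℂ) :
    IsEigenvalueC A μ ↔ (A.charpoly.map Complex.ofRealHom).IsRoot μ := by
  rw [IsEigenvalueC, ← Matrix.charpoly_map]
  rfl

theorem isEigenvalueC_inv_mul_mul {n : ℕ} {S : Matrix (Fin n) (Fin n) ℝ} (hS : IsUnit S)
    (A : Matrix (Fin n) (Fin n) ℝ) (μ : ℂ) :
    IsEigenvalueC (S⁻¹ * A * S) μ ↔ IsEigenvalueC A μ := by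
  rw [isEigenvalueC_iff, isEigenvalueC_iff, ← hS.unit_spec, Matrix.charpoly_units_conj']

theorem mem_secondTypeRegion_transpose_of_columnShift {n : ℕ} (hodd : n % 2 = 1)
    {B : Matrix (Fin n) (Fin n) ℝ} {lam : ℝ} (hrow : B *ᵥ 1 = lam • 1) {μ : ℂ}
    (hμ : IsEigenvalueC B μ) (hne : μ ≠ lam) {C : Matrix (Fin n) (Fin n) ℝ} {c : Fin n → ℝ}
    (hC : ∀ i j, C i j = B i j + c j) : μ ∈ secondTypeRegion Cᵀ := by
  obtain ⟨x, hx0, hx⟩ := Matrix.exists_vecMul_eq_smul_of_isRoot_charpoly hμ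
  have hrowC : B.map ((↑) : ℝ → ℂ) *ᵥ 1 = (lam : ℂ) • 1 := by
    ext i
    simpa [Matrix.mulVec, dotProduct] using congrArg ((↑) : ℝ → ℂ) (congrFun hrow i)
  have hsum := Matrix.sum_eq_zero_of_vecMul_eq_smul hrowC hx hne
  have hCx : x ᵥ* C.map ((↑) : ℝ → ℂ) = μ • x := by
    rw [Matrix.vecMul_eq_of_sum_eq_zero (B := B.map ((↑) : ℝ → ℂ)) (c := fun j => (c j : ℂ))
      (fun i j => by simp [hC]) hsum, hx]
  refine mem_secondTypeRegion_of_mulVec_eq_smul hodd Cᵀ ?_ hx0 hsum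
  rwa [Matrix.transpose_map, Matrix.mulVec_transpose]

theorem norm_le_sup'_of_columnShift {n : ℕ} (hodd : n % 2 = 1)
    {B : Matrix (Fin n) (Fin n) ℝ} {lam : ℝ} (hrow : B *ᵥ 1 = lam • 1) {μ : ℂ}
    (hμ : IsEigenvalueC B μ) (hne : μ ≠ lam) {C : Matrix (Fin n) (Fin n) ℝ} {c : Fin n → ℝ}
    (hC : ∀ i j, C i j = B i j + c j) (h : (Finset.univ : Finset (Fin n)).Nonempty) :
    ‖μ‖ ≤ Finset.univ.sup' h fun i => |C i i| + secondTypeRadius Cᵀ i := by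
  obtain ⟨i, hi⟩ := exists_norm_le_of_mem_secondTypeRegion
    (mem_secondTypeRegion_transpose_of_columnShift hodd hrow hμ hne hC)
  exact hi.trans (Finset.le_sup' (fun i => |C i i| + secondTypeRadius Cᵀ i) (Finset.mem_univ i))

/-- Theorem 7, odd case bound (6): with `F` and `G` obtained from
`B = S⁻¹ A S` by Theorem 5, every eigenvalue `λ ≠ λ₁` of `A` satisfies
`|λ| ≤ min{max_i (|f_ii| + r̂_i(Fᵀ)), max_i (|g_ii| + r̂_i(Gᵀ))}`. -/
theorem stmt12 {n : ℕ} (hodd : Odd n) (hn : 3 ≤ n) (A : Matrix (Fin n) (Fin n) ℝ)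
    (lam1 : ℝ) (v : Fin n → ℝ) (hv : ∀ i, v i ≠ 0) (hAv : A *ᵥ v = lam1 • v)
    (S B : Matrix (Fin n) (Fin n) ℝ) (hS : S = Matrix.diagonal v) (hB : B = S⁻¹ * A * S)
    (F G : Matrix (Fin n) (Fin n) ℝ)
    (hF : ∀ i j, F i j = B i j + -kthLargestOffDiag B j ((n - 1) / 2))
    (hG : ∀ i j, G i j = B i j + -kthLargestOffDiag B j ((n + 1) / 2))
    (mu : ℂ) (hmu : IsEigenvalueC A mu) (hne : mu ≠ (lam1 : ℂ)) :
    ‖mu‖ ≤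
      min
        (Finset.univ.sup' ⟨(⟨0, by omega⟩ : Fin n), Finset.mem_univ _⟩
          (fun i => |F i i| + secondTypeRadius Fᵀ i))
        (Finset.univ.sup' ⟨(⟨0, by omega⟩ : Fin n), Finset.mem_univ _⟩
          (fun i => |G i i| + secondTypeRadius Gᵀ i)) := by
  have hSunit : IsUnit S :=
    hS ▸ Matrix.isUnit_diagonal.2 (Pi.isUnit_iff.2 fun i => (hv i).isUnit)
  have hS1 : S *ᵥ 1 = v := by
    ext i
    simp [hS, Matrix.mulVec_diagonal]
  have hrow : B *ᵥ 1 = lam1 • 1 :=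
    hB ▸ Matrix.inv_mul_mul_mulVec_eq_smul hSunit (by rwa [hS1])
  have hμ : IsEigenvalueC B mu := hB ▸ (isEigenvalueC_inv_mul_mul hSunit A mu).2 hmu
  have hodd' := Nat.odd_iff.1 hodd
  exact le_min (norm_le_sup'_of_columnShift hodd' hrow hμ hne hF _)
    (norm_le_sup'_of_columnShift hodd' hrow hμ hne hG _)
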